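/- Three-process setting with H(Q) = H×H×H endowed with ⟨h,h'⟩_{H(Q)} = ⟨h, Q⁻¹h'⟩_0 where Q is the 3×3 block operator with identity diagonal and off-diagonal blocks C_{ij} (C_{ji} = C_{ij}*), assumed invertible. Let M1 = {(f1, C21 f1, C31 f1)} and M2 = {(C12 f2, f2, C32 f2)}. Then for h = (C12 f2, f2, C32 f2) ∈ M2, the orthogonal projection of h onto M1 in H(Q) is (C12 f2, C21 C12 f2, C31 C12 f2), and h − P_{M1} h = (0, (I − C21 C12) f2, (C32 − C31 C12) f2). -/

import Mathlib

open scoped RealInnerProductSpace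
open ContinuousLinearMap

/-- The element of `H₀ = H × H × H` (ℓ² product structure) with the given components. -/
noncomputable def mk3 {H : Type*} (a b c : H) : PiLp 2 (fun _ : Fin 3 => H) :=
  (WithLp.equiv 2 (Fin 3 → H)).symm ![a, b, c]

/-- The `i`-th component. -/
noncomputable def cmp3 {H : Type*} (i : Fin 3) (p : PiLp 2 (fun _ : Fin 3 => H)) : H :=
  (WithLp.equiv 2 (Fin 3 → H)) p i

/-!
`Q⁻¹` maps `(f1, C21 f1, C31 f1) ∈ M1` back to `(f1, 0, 0)`, since that is exactly `Q (f1, 0, 0)`.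
Hence `⟪h - P h, m⟫_{H(Q)} = ⟪h - P h, (f1, 0, 0)⟫₀` only sees the first component of `h - P h`,
which is `C12 f2 - C12 f2 = 0`.
-/

@[simp]
lemma cmp3_mk3 {H : Type*} (a b c : H) (i : Fin 3) :
    cmp3 i (mk3 a b c) = ![a, b, c] i := rfl

lemma mk3_sub {H : Type*} [AddCommGroup H] (a b c a' b' c' : H) :
    mk3 a b c - mk3 a' b' c' = mk3 (a - a') (b - b') (c - c') := by
  ext i
  fin_cases i <;> rfl

lemma inner_mk3 {H : Type*} [NormedAddCommGroup H] [InnerProductSpace ℝ H]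
    (a b c a' b' c' : H) :
    ⟪mk3 a b c, mk3 a' b' c'⟫ = ⟪a, a'⟫ + ⟪b, b'⟫ + ⟪c, c'⟫ := by
  simp [mk3, PiLp.inner_apply, Fin.sum_univ_three]

lemma inner_mk3_zero_mk3_zero_zero {H : Type*} [NormedAddCommGroup H] [InnerProductSpace ℝ H]
    (b c a' : H) : ⟪mk3 0 b c, mk3 a' 0 0⟫ = 0 := by
  simp [inner_mk3]

theorem three_process_projection_onto_M1_general
    {H : Type*} [NormedAddCommGroup H] [InnerProductSpace ℝ H] [CompleteSpace H]
    (C12 C13 C23 : H →L[ℝ] H)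
    (Q Qinv : PiLp 2 (fun _ : Fin 3 => H) →L[ℝ] PiLp 2 (fun _ : Fin 3 => H))
    (hQ : ∀ p : PiLp 2 (fun _ : Fin 3 => H),
      Q p = mk3
        (cmp3 0 p + C12 (cmp3 1 p) + C13 (cmp3 2 p))
        (ContinuousLinearMap.adjoint C12 (cmp3 0 p) + cmp3 1 p + C23 (cmp3 2 p))
        (ContinuousLinearMap.adjoint C13 (cmp3 0 p)
          + ContinuousLinearMap.adjoint C23 (cmp3 1 p) + cmp3 2 p))
    (hQiQ : Qinv ∘L Q = 1) :
    ∀ f2 : H,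
      (∀ f1 : H,
        ⟪mk3 (C12 f2) f2 (ContinuousLinearMap.adjoint C23 f2)
            - mk3 (C12 f2) (ContinuousLinearMap.adjoint C12 (C12 f2))
                (ContinuousLinearMap.adjoint C13 (C12 f2)),
          Qinv (mk3 f1 (ContinuousLinearMap.adjoint C12 f1)
            (ContinuousLinearMap.adjoint C13 f1))⟫ = 0) ∧
      mk3 (C12 f2) f2 (ContinuousLinearMap.adjoint C23 f2)
          - mk3 (C12 f2) (ContinuousLinearMap.adjoint C12 (C12 f2))
              (ContinuousLinearMap.adjoint C13 (C12 f2))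
        = mk3 0 (f2 - ContinuousLinearMap.adjoint C12 (C12 f2))
            (ContinuousLinearMap.adjoint C23 f2
              - ContinuousLinearMap.adjoint C13 (C12 f2)) := by
  intro f2
  have hQ_M1 (f1 : H) : Q (mk3 f1 0 0) = mk3 f1 (adjoint C12 f1) (adjoint C13 f1) := by
    simp [hQ]
  have hQinv_M1 (f1 : H) : Qinv (mk3 f1 (adjoint C12 f1) (adjoint C13 f1)) = mk3 f1 0 0 := by
    rw [← hQ_M1]
    exact DFunLike.congr_fun hQiQ _
  have hdiff : mk3 (C12 f2) f2 (adjoint C23 f2) - mk3 (C12 f2) (adjoint C12 (C12 f2))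
      (adjoint C13 (C12 f2))
        = mk3 0 (f2 - adjoint C12 (C12 f2)) (adjoint C23 f2 - adjoint C13 (C12 f2)) := by
    rw [mk3_sub, sub_self]
  refine ⟨fun f1 => ?_, hdiff⟩
  rw [hdiff, hQinv_M1, inner_mk3_zero_mk3_zero_zero]

/-- Proposition A.7: in the three-process space `H(Q)` with inner product `⟪h, Q⁻¹ h'⟫₀`,
for `h = (C12 f2, f2, C32 f2) ∈ M2` the orthogonal projection of `h` onto
`M1 = {(f1, C21 f1, C31 f1)}` is `(C12 f2, C21 C12 f2, C31 C12 f2)`, and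
`h − P_{M1} h = (0, (I − C21 C12) f2, (C32 − C31 C12) f2)`. -/
theorem three_process_projection_onto_M1
    {H : Type*} [NormedAddCommGroup H] [InnerProductSpace ℝ H] [CompleteSpace H]
    (C12 C13 C23 : H →L[ℝ] H)
    (Q Qinv : PiLp 2 (fun _ : Fin 3 => H) →L[ℝ] PiLp 2 (fun _ : Fin 3 => H))
    (hQ : ∀ p : PiLp 2 (fun _ : Fin 3 => H),
      Q p = mk3
        (cmp3 0 p + C12 (cmp3 1 p) + C13 (cmp3 2 p))
        (ContinuousLinearMap.adjoint C12 (cmp3 0 p) + cmp3 1 p + C23 (cmp3 2 p))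
        (ContinuousLinearMap.adjoint C13 (cmp3 0 p)
          + ContinuousLinearMap.adjoint C23 (cmp3 1 p) + cmp3 2 p))
    (hQQi : Q ∘L Qinv = 1) (hQiQ : Qinv ∘L Q = 1) :
    ∀ f2 : H,
      (∀ f1 : H,
        ⟪mk3 (C12 f2) f2 (ContinuousLinearMap.adjoint C23 f2)
            - mk3 (C12 f2) (ContinuousLinearMap.adjoint C12 (C12 f2))
                (ContinuousLinearMap.adjoint C13 (C12 f2)),
          Qinv (mk3 f1 (ContinuousLinearMap.adjoint C12 f1)
            (ContinuousLinearMap.adjoint C13 f1))⟫ = 0) ∧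
      mk3 (C12 f2) f2 (ContinuousLinearMap.adjoint C23 f2)
          - mk3 (C12 f2) (ContinuousLinearMap.adjoint C12 (C12 f2))
              (ContinuousLinearMap.adjoint C13 (C12 f2))
        = mk3 0 (f2 - ContinuousLinearMap.adjoint C12 (C12 f2))
            (ContinuousLinearMap.adjoint C23 f2
              - ContinuousLinearMap.adjoint C13 (C12 f2)) :=
  three_process_projection_onto_M1_general C12 C13 C23 Q Qinv hQ hQiQ
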